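/- arXiv:1501.00787 — 5 statements merged into one kernel-verified Lean document; each statement's English description precedes it below -/
import Mathlib

section
/- If R is a ring satisfying the identity [[x,y],z] = 0 for all x,y,z ∈ R (Lie nilpotent of index 2), then [a,b][a,c] = 0 for all a,b,c ∈ R. -/
theorem lie_nilpotent_two_comm_mul_comm_eq_zero {R : Type*} [Ring R]
    (hL2 : ∀ x y z : R, (x * y - y * x) * z - z * (x * y - y * x) = 0)
    (a b c : R) : (a * b - b * a) * (a * c - c * a) = 0 := by
  have h1 := hL2 a (b * a) c
  have h2 := hL2 a a c
  have h3 := hL2 a b c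
  have key : (a * b - b * a) * (a * c - c * a) =
      ((a * (b * a) - (b * a) * a) * c - c * (a * (b * a) - (b * a) * a))
      - b * ((a * a - a * a) * c - c * (a * a - a * a))
      - ((a * b - b * a) * c - c * (a * b - b * a)) * a := by
    noncomm_ring
  rw [key, h1, h2, h3]
  noncomm_ring
end

section
/- If R is a ring satisfying the identity [[x,y],z] = 0 for all x,y,z ∈ R, and a,b ∈ R satisfy ab = 0, then bxbya = 0 for all x,y ∈ R. -/
theorem lie_nilpotent_two_bxbya_eq_zero {R : Type*} [Ring R]
    (hL2 : ∀ x y z : R, (x * y - y * x) * z - z * (x * y - y * x) = 0)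
    (a b : R) (hab : a * b = 0) (x y : R) : b * x * b * y * a = 0 := by
  have h0 : a * (b * y) = 0 := by rw [← mul_assoc, hab, zero_mul]
  have hc := hL2 (b * y) a (b * x)
  rw [h0, sub_zero, sub_eq_zero] at hc
  have h1 : b * x * b * y * a = b * x * (b * y * a) := by noncomm_ring
  rw [h1, ← hc]
  have : b * y * a * (b * x) = b * y * (a * b) * x := by noncomm_ring
  rw [this, hab, mul_zero, zero_mul]
end

section
/- Let n ≥ 3 and let R be a ring such that every left-normed commutator of length n+1 vanishes (Lie nilpotent of index n). Then the product of any two left-normed commutators of length n is zero: [x₁,…,x_n]* · [y₁,…,y_n]* = 0 for all x_i, y_i ∈ R. -/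
/-- Left-normed commutator: `lnc x [x₂,…,x_k] = [x, x₂, …, x_k]*`. -/
def lnc {R : Type*} [Ring R] (x : R) (l : List R) : R :=
  l.foldl (fun a y => a * y - y * a) x

lemma lnc_append {R : Type*} [Ring R] (x : R) (l1 l2 : List R) :
    lnc x (l1 ++ l2) = lnc (lnc x l1) l2 := by
  simp [lnc]

lemma lnc_zero {R : Type*} [Ring R] (l : List R) : lnc (0 : R) l = 0 := by
  induction l with
  | nil => rfl
  | cons v l ih =>
      show lnc (0 * v - v * 0) l = 0
      rw [zero_mul, mul_zero, sub_zero]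
      exact ih

lemma lnc_ge {R : Type*} [Ring R] {n : ℕ}
    (hLn : ∀ (x : R) (l : List R), l.length = n → lnc x l = 0)
    (x : R) (l : List R) (h : n ≤ l.length) : lnc x l = 0 := by
  calc lnc x l = lnc (lnc x (l.take n)) (l.drop n) := by
        rw [← lnc_append, List.take_append_drop]
    _ = lnc 0 (l.drop n) := by rw [hLn x _ (by simp [h])]
    _ = 0 := lnc_zero _

lemma comm_lnc {R : Type*} [Ring R] {c : R}
    (hc : ∀ v w : R, (c * v - v * c) * w - w * (c * v - v * c) = 0) :
    ∀ (l : List R) (u : R), c * lnc u l - lnc u l * c = lnc (c * u - u * c) l := by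
  intro l
  induction l with
  | nil => intro u; rfl
  | cons v l ih =>
      intro u
      show c * lnc (u * v - v * u) l - lnc (u * v - v * u) l * c
          = lnc ((c * u - u * c) * v - v * (c * u - u * c)) l
      rw [ih]
      congr 1
      have h := hc v u
      have key : c * (u * v - v * u) - (u * v - v * u) * c
          = ((c * u - u * c) * v - v * (c * u - u * c))
            - ((c * v - v * c) * u - u * (c * v - v * c)) := by noncomm_ring
      rw [key, h, sub_zero]

theorem prod_lnc_eq_zero {R : Type*} [Ring R] (n : ℕ) (hn : 3 ≤ n)
    (hLn : ∀ (x : R) (l : List R), l.length = n → lnc x l = 0)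
    (x y : R) (lx ly : List R) (hlx : lx.length = n - 1) (hly : ly.length = n - 1) :
    lnc x lx * lnc y ly = 0 := by
  rcases List.eq_nil_or_concat lx with rfl | ⟨lx', xn, rfl⟩
  · simp at hlx; omega
  rcases List.eq_nil_or_concat ly with rfl | ⟨ly', yn, rfl⟩
  · simp at hly; omega
  simp only [List.concat_eq_append] at hlx hly ⊢
  have hlx' : lx'.length = n - 2 := by simp at hlx; omega
  have hly' : ly'.length = n - 2 := by simp at hly; omega
  set c : R := lnc x lx' with hc_def
  set d : R := lnc y ly' with hd_def
  -- unfold the two commutators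
  have ha : lnc x (lx' ++ [xn]) = c * xn - xn * c := by rw [lnc_append]; rfl
  have hb : lnc y (ly' ++ [yn]) = d * yn - yn * d := by rw [lnc_append]; rfl
  -- [c, v] is central for every v
  have hc : ∀ v w : R, (c * v - v * c) * w - w * (c * v - v * c) = 0 := by
    intro v w
    have h := hLn x (lx' ++ [v, w]) (by simp [hlx']; omega)
    rwa [lnc_append] at h
  -- a = [c, xn] is central
  have haC : ∀ r : R, (c * xn - xn * c) * r = r * (c * xn - xn * c) := by
    intro r
    exact sub_eq_zero.mp (hc xn r)
  -- c and d commute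
  have hcd : c * d = d * c := by
    have h := comm_lnc hc ly' y
    have h2 : c * y - y * c = lnc x (lx' ++ [y]) := by rw [lnc_append]; rfl
    rw [h2, ← lnc_append] at h
    have h3 : lnc x ((lx' ++ [y]) ++ ly') = 0 := by
      apply lnc_ge hLn
      simp [hlx', hly']
      omega
    rw [h3] at h
    exact sub_eq_zero.mp h
  -- a * d = [c, xn * d]
  have had : (c * xn - xn * c) * d = c * (xn * d) - (xn * d) * c := by
    rw [sub_mul, mul_assoc, mul_assoc, hcd, ← mul_assoc, ← mul_assoc]
  -- main computation: a*b = [[c, xn*d], yn]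
  have key : lnc x (lx' ++ [xn]) * lnc y (ly' ++ [yn])
      = (c * (xn * d) - (xn * d) * c) * yn - yn * (c * (xn * d) - (xn * d) * c) := by
    rw [ha, hb, ← had]
    set a : R := c * xn - xn * c
    rw [mul_sub, ← mul_assoc, ← mul_assoc, haC yn, mul_assoc yn a d]
  rw [key]
  have h := hLn x (lx' ++ [xn * d, yn]) (by simp [hlx']; omega)
  rwa [lnc_append] at h
end

section
/- Let n ≥ 2 and let R be a ring Lie nilpotent of index n. Then every element of the two-sided ideal R[R,R]R generated by all commutators [a,b] = ab - ba is nilpotent. -/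
namespace CommIdealNilAux

open TwoSidedIdeal

variable {R : Type*} [Ring R]

/-- The ring commutator. -/
def br (a b : R) : R := a * b - b * a

lemma lnc_concat (x : R) (l : List R) (y : R) :
    lnc x (l ++ [y]) = br (lnc x l) y := by
  simp [lnc, List.foldl_append, br]

lemma lnc_cons (x a : R) (l : List R) : lnc x (a :: l) = lnc (br x a) l := by
  simp [lnc, br]

/-- `IsC k c` : `c` is a left-normed commutator built with `k` brackets. -/
def IsC (k : ℕ) (c : R) : Prop := ∃ (x : R) (l : List R), l.length = k ∧ lnc x l = c

lemma isC_zero (x : R) : IsC 0 x := ⟨x, [], rfl, rfl⟩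

lemma isC_br {k : ℕ} {c : R} (h : IsC k c) (y : R) : IsC (k + 1) (br c y) := by
  obtain ⟨x, l, hl, rfl⟩ := h
  exact ⟨x, l ++ [y], by simp [hl], lnc_concat x l y⟩

lemma isC_succ {k : ℕ} {c : R} (h : IsC (k + 1) c) :
    ∃ d y, IsC k d ∧ c = br d y := by
  obtain ⟨x, l, hl, rfl⟩ := h
  rcases List.eq_nil_or_concat l with rfl | ⟨l', y, rfl⟩
  · simp at hl
  · simp only [List.concat_eq_append, List.length_append, List.length_cons,
      List.length_nil] at hl
    exact ⟨lnc x l', y, ⟨x, l', by omega, rfl⟩, by simpa using lnc_concat x l' y⟩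

lemma br_jacobi (q a b : R) : br q (br a b) = br (br q a) b - br (br q b) a := by
  simp only [br]; noncomm_ring

lemma br_central {c : R} (hc : ∀ z : R, c * z = z * c) (y : R) : br c y = 0 := by
  simp [br, hc y]

lemma br_zero_left (y : R) : br (0 : R) y = 0 := by simp [br]

section LieNil

variable {m : ℕ}

/-- Commutators of maximal weight are central. -/
lemma central (hL : ∀ c : R, IsC (m + 2) c → c = 0) {c : R} (hc : IsC (m + 1) c)
    (y : R) : c * y = y * c := by
  have h0 : br c y = 0 := hL _ (isC_br hc y)
  have := sub_eq_zero.mp h0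
  simpa [br] using this

/-- `γ_{m+1}` elements commute with all higher commutators. -/
lemma br_high_zero (hL : ∀ c : R, IsC (m + 2) c → c = 0) {q : R} (hq : IsC m q) :
    ∀ (j : ℕ) {s : R}, IsC (j + 1) s → br q s = 0 := by
  intro j
  induction j with
  | zero =>
    intro s hs
    obtain ⟨d, y, _, rfl⟩ := isC_succ hs
    rw [br_jacobi]
    rw [br_central (central hL (isC_br hq d)) y,
        br_central (central hL (isC_br hq y)) d, sub_zero]
  | succ j ih =>
    intro s hs
    obtain ⟨d, y, hd, rfl⟩ := isC_succ hs
    rw [br_jacobi, ih hd, br_zero_left,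
        br_central (central hL (isC_br hq y)) d, sub_zero]

/-- The swap identity `[x,y]·[q,y'] = -([q,y]·[x,y'])` for `q ∈ γ_{m+1}`. -/
lemma br_central' {c : R} (hc : ∀ z : R, c * z = z * c) (y : R) : br y c = 0 := by
  simp [br, hc y]

lemma mul_central_br {c : R} (hc : ∀ z : R, c * z = z * c) (x y : R) :
    br x y * c = br x (y * c) := by
  show (x * y - y * x) * c = x * (y * c) - (y * c) * x
  rw [sub_mul, mul_assoc x y c, mul_assoc y x c, ← hc x, ← mul_assoc y c x]

lemma br_central_mul {e : R} (he : ∀ z : R, e * z = z * e) (x y' : R) :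
    br x (e * y') = e * br x y' := by
  show x * (e * y') - (e * y') * x = e * (x * y' - y' * x)
  rw [mul_sub, ← mul_assoc x e y', ← he x, mul_assoc e x y', mul_assoc e y' x]

/-- The swap identity `[x,y]·[q,y'] = -([q,y]·[x,y'])` for `q ∈ γ_{m+1}`. -/
lemma swap_identity (hL : ∀ c : R, IsC (m + 2) c → c = 0) {q : R} (hq : IsC m q)
    (x y y' : R) : br x y * br q y' = -(br q y * br x y') := by
  have hc : ∀ z : R, br q y' * z = z * br q y' := central hL (isC_br hq y')
  have hcyy' : ∀ z : R, br q (y * y') * z = z * br q (y * y') :=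
    central hL (isC_br hq (y * y'))
  have he : ∀ z : R, br q y * z = z * br q y := central hL (isC_br hq y)
  have step2 : y * br q y' = br q (y * y') - br q y * y' := by
    simp only [br]; noncomm_ring
  have step3 : br x (br q (y * y') - br q y * y')
      = br x (br q (y * y')) - br x (br q y * y') := by
    simp only [br]; noncomm_ring
  rw [mul_central_br hc x y, step2, step3, br_central' hcyy' x,
    br_central_mul he x y', zero_sub]

lemma br_anti (a b : R) : br a b = -(br b a) := by simp [br]

lemma br_self (a : R) : br a a = 0 := by simp [br]

/-- For `m ≥ 1`: the product of two maximal-weight commutators vanishes. -/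
lemma top_mul_top (hL : ∀ c : R, IsC (m + 2) c → c = 0) (hm : 1 ≤ m)
    {c d : R} (hc : IsC (m + 1) c) (hd : IsC (m + 1) d) : c * d = 0 := by
  obtain ⟨p, a, hp, rfl⟩ := isC_succ hc
  obtain ⟨q, b, hq, rfl⟩ := isC_succ hd
  nth_rewrite 1 [br_anti p a]
  rw [neg_mul, swap_identity hL hq a p b, neg_neg]
  obtain ⟨j, rfl⟩ : ∃ j, m = j + 1 := ⟨m - 1, (Nat.succ_pred_eq_of_pos hm).symm⟩
  rw [br_high_zero hL hq j hp, zero_mul]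

/-- For `m = 0` (Lie nilpotency class 2): commutators square to zero. -/
lemma comm_sq_zero (hL : ∀ c : R, IsC (0 + 2) c → c = 0) {c : R}
    (hc : IsC 1 c) : c * c = 0 := by
  obtain ⟨a, b, _, rfl⟩ := isC_succ hc
  nth_rewrite 1 [br_anti a b]
  rw [neg_mul, swap_identity hL (isC_zero a) b a b, br_self,
    zero_mul, neg_zero, neg_zero]

end LieNil

/-- If generators of a span are central and pairwise multiply to zero,
any two elements of the span multiply to zero. -/
lemma span_mul_span_zero {S : Set R} (hcen : ∀ g ∈ S, ∀ z : R, g * z = z * g)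
    (hprod : ∀ g ∈ S, ∀ h ∈ S, g * h = 0) :
    ∀ v ∈ span S, ∀ w ∈ span S, v * w = 0 := by
  have hg : ∀ g ∈ S, ∀ w ∈ span S, g * w = 0 := by
    intro g hgS w hw
    let B : TwoSidedIdeal R := TwoSidedIdeal.mk' {w : R | g * w = 0}
      (by show g * 0 = 0; rw [mul_zero])
      (fun {x y} hx hy => by
        show g * (x + y) = 0
        rw [mul_add, show g * x = 0 from hx, show g * y = 0 from hy, add_zero])
      (fun {x} hx => by
        show g * (-x) = 0
        rw [mul_neg, show g * x = 0 from hx, neg_zero])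
      (fun {x y} hy => by
        show g * (x * y) = 0
        rw [← mul_assoc, hcen g hgS x, mul_assoc, show g * y = 0 from hy, mul_zero])
      (fun {x y} hx => by
        show g * (x * y) = 0
        rw [← mul_assoc, show g * x = 0 from hx, zero_mul])
    have := mem_span_iff.mp hw B (fun h hh => by
      simp only [SetLike.mem_coe, B, TwoSidedIdeal.mem_mk']
      exact hprod g hgS h hh)
    simpa only [B, TwoSidedIdeal.mem_mk', Set.mem_setOf_eq] using this
  intro v hv w hw
  let A : TwoSidedIdeal R := TwoSidedIdeal.mk' {v : R | ∀ w ∈ span S, v * w = 0}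
    (fun w hw => by rw [zero_mul])
    (fun {x y} hx hy w hw => by rw [add_mul, hx w hw, hy w hw, add_zero])
    (fun {x} hx w hw => by rw [neg_mul, hx w hw, neg_zero])
    (fun {x y} hy w hw => by rw [mul_assoc, hy w hw, mul_zero])
    (fun {x y} hx w hw => by
      rw [mul_assoc]
      exact hx (y * w) ((span S).mul_mem_left y w hw))
  have hv' := mem_span_iff.mp hv A (fun g hgS => by
    simp only [SetLike.mem_coe, A, TwoSidedIdeal.mem_mk']
    exact hg g hgS)
  exact ((TwoSidedIdeal.mem_mk' _ _ _ _ _ _ v).mp hv') w hw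

/-- Mapping spans through ring homs. -/
lemma map_mem_span {S' : Type*} [Ring S'] (f : R →+* S') {A : Set R} {B : Set S'}
    (hgen : ∀ g ∈ A, f g ∈ span B) : ∀ u ∈ span A, f u ∈ span B := by
  intro u hu
  let C : TwoSidedIdeal R := TwoSidedIdeal.mk' {x : R | f x ∈ span B}
    (by show f 0 ∈ span B; rw [map_zero]; exact (span B).zero_mem)
    (fun {x y} hx hy => by
      show f (x + y) ∈ span B
      rw [map_add]; exact (span B).add_mem hx hy)
    (fun {x} hx => by
      show f (-x) ∈ span B
      rw [map_neg]; exact (span B).neg_mem hx)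
    (fun {x y} hy => by
      show f (x * y) ∈ span B
      rw [map_mul]; exact (span B).mul_mem_left _ _ hy)
    (fun {x y} hx => by
      show f (x * y) ∈ span B
      rw [map_mul]; exact (span B).mul_mem_right _ _ hx)
  have := mem_span_iff.mp hu C (fun g hg => by
    simp only [SetLike.mem_coe, C, TwoSidedIdeal.mem_mk']
    exact hgen g hg)
  exact (TwoSidedIdeal.mem_mk' _ _ _ _ _ _ u).mp this

/-- Elements of a span lie in the span of finitely many generators. -/
lemma exists_finset_span {S : Set R} {u : R} (hu : u ∈ span S) :
    ∃ T : Finset R, ↑T ⊆ S ∧ u ∈ span (T : Set R) := by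
  classical
  let D : TwoSidedIdeal R := TwoSidedIdeal.mk'
    {x : R | ∃ T : Finset R, ↑T ⊆ S ∧ x ∈ span (T : Set R)}
    ⟨∅, by simp, (span _).zero_mem⟩
    (fun {x y} hx hy => by
      obtain ⟨T₁, hT₁, hx⟩ := hx
      obtain ⟨T₂, hT₂, hy⟩ := hy
      refine ⟨T₁ ∪ T₂, ?_, ?_⟩
      · rw [Finset.coe_union]
        exact Set.union_subset hT₁ hT₂
      · refine (span _).add_mem ?_ ?_
        · exact span_mono (by rw [Finset.coe_union]; exact Set.subset_union_left) hx
        · exact span_mono (by rw [Finset.coe_union]; exact Set.subset_union_right) hy)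
    (fun {x} hx => by
      obtain ⟨T, hT, hx⟩ := hx
      exact ⟨T, hT, (span _).neg_mem hx⟩)
    (fun {x y} hy => by
      obtain ⟨T, hT, hy⟩ := hy
      exact ⟨T, hT, (span _).mul_mem_left _ _ hy⟩)
    (fun {x y} hx => by
      obtain ⟨T, hT, hx⟩ := hx
      exact ⟨T, hT, (span _).mul_mem_right _ _ hx⟩)
  have := mem_span_iff.mp hu D (fun g hg => by
    simp only [SetLike.mem_coe, D, TwoSidedIdeal.mem_mk', Set.mem_setOf_eq]
    exact ⟨{g}, by simpa using hg, subset_span (by simp)⟩)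
  exact (TwoSidedIdeal.mem_mk' _ _ _ _ _ _ u).mp this

end CommIdealNilAux

section Quotients

open CommIdealNilAux TwoSidedIdeal

variable {R : Type*} [Ring R]

lemma phi_surjective (I : TwoSidedIdeal R) :
    Function.Surjective (RingCon.mk' I.ringCon) := fun y =>
  Quotient.inductionOn' y fun x => ⟨x, rfl⟩

lemma phi_ker (I : TwoSidedIdeal R) (x : R) :
    RingCon.mk' I.ringCon x = 0 ↔ x ∈ I := by
  rw [show (0 : I.ringCon.Quotient) = RingCon.mk' I.ringCon 0 from (map_zero _).symm]
  rw [show (RingCon.mk' I.ringCon x = RingCon.mk' I.ringCon 0) ↔ I.ringCon x 0 from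
    RingCon.eq I.ringCon]
  rw [I.rel_iff x 0, sub_zero]

lemma lnc_map {S' : Type*} [Ring S'] (f : R →+* S') (x : R) (l : List R) :
    f (lnc x l) = lnc (f x) (l.map f) := by
  induction l generalizing x with
  | nil => simp [lnc]
  | cons a l ih =>
    rw [lnc_cons, List.map_cons, lnc_cons, ih]
    congr 1
    simp [br]

lemma exists_list_map {S' : Type*} [Ring S'] (f : R →+* S')
    (hf : Function.Surjective f) (l' : List S') :
    ∃ l : List R, l.map f = l' := by
  induction l' with
  | nil => exact ⟨[], rfl⟩
  | cons a l ih =>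
    obtain ⟨x, hx⟩ := hf a
    obtain ⟨l₀, hl₀⟩ := ih
    exact ⟨x :: l₀, by simp [hx, hl₀]⟩

end Quotients

namespace CommIdealNilAux

open TwoSidedIdeal

universe u

lemma mem_span_empty {R : Type*} [Ring R] {u : R} (hu : u ∈ span (∅ : Set R)) :
    u = 0 := by
  let Z : TwoSidedIdeal R := TwoSidedIdeal.mk' {x : R | x = 0}
    rfl
    (fun {x y} hx hy => by
      show x + y = 0
      rw [show x = 0 from hx, show y = 0 from hy, add_zero])
    (fun {x} hx => by show -x = 0; rw [show x = 0 from hx, neg_zero])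
    (fun {x y} hy => by show x * y = 0; rw [show y = 0 from hy, mul_zero])
    (fun {x y} hx => by show x * y = 0; rw [show x = 0 from hx, zero_mul])
  exact (TwoSidedIdeal.mem_mk' _ _ _ _ _ _ u).mp
    (mem_span_iff.mp hu Z (by simp))

/-- A two-sided ideal generated by finitely many central square-zero elements is nil. -/
lemma nil_of_finset : ∀ (k : ℕ) {R : Type u} [Ring R] (T : Finset R),
    T.card ≤ k → (∀ c ∈ T, (∀ z : R, c * z = z * c) ∧ c * c = 0) →
    ∀ u ∈ span (T : Set R), IsNilpotent u := by
  intro k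
  induction k with
  | zero =>
    intro R _ T hcard _ u hu
    have hT : T = ∅ := Finset.card_eq_zero.mp (Nat.le_zero.mp hcard)
    subst hT
    rw [show u = 0 from mem_span_empty (by simpa using hu)]
    exact IsNilpotent.zero
  | succ k ih =>
    intro R _ T hcard hprops u hu
    rcases T.eq_empty_or_nonempty with rfl | ⟨c, hc⟩
    · rw [show u = 0 from mem_span_empty (by simpa using hu)]
      exact IsNilpotent.zero
    · classical
      let J := span ({c} : Set R)
      have hcen : ∀ z : R, c * z = z * c := (hprops c hc).1
      have hsq : c * c = 0 := (hprops c hc).2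
      have hJ2 : ∀ v ∈ J, ∀ w ∈ J, v * w = 0 :=
        span_mul_span_zero
          (fun g hg => by rw [Set.mem_singleton_iff] at hg; subst hg; exact hcen)
          (fun g hg h hh => by
            rw [Set.mem_singleton_iff] at hg hh; subst hg; subst hh; exact hsq)
      let Q := J.ringCon.Quotient
      let φ : R →+* Q := RingCon.mk' J.ringCon
      have hφs : Function.Surjective φ := phi_surjective J
      let T' : Finset Q := (T.erase c).image φ
      have hcard' : T'.card ≤ k := by
        refine le_trans Finset.card_image_le ?_
        have := Finset.card_erase_of_mem hc
        omega
      have hprops' : ∀ c' ∈ T', (∀ z : Q, c' * z = z * c') ∧ c' * c' = 0 := by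
        intro c' hc'
        obtain ⟨d, hd, rfl⟩ := Finset.mem_image.mp hc'
        have hdT := Finset.mem_of_mem_erase hd
        constructor
        · intro z
          obtain ⟨w, rfl⟩ := hφs z
          rw [← map_mul, ← map_mul, (hprops d hdT).1 w]
        · rw [← map_mul, (hprops d hdT).2, map_zero]
      have hu' : φ u ∈ span (T' : Set Q) := by
        refine map_mem_span φ (fun g hg => ?_) u hu
        rw [Finset.mem_coe] at hg
        rcases eq_or_ne g c with rfl | hne
        · rw [(phi_ker J g).mpr (subset_span (Set.mem_singleton g))]
          exact (span _).zero_mem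
        · exact subset_span (Finset.mem_coe.mpr
            (Finset.mem_image.mpr ⟨g, Finset.mem_erase.mpr ⟨hne, hg⟩, rfl⟩))
      obtain ⟨a, ha⟩ := ih T' hcard' hprops' (φ u) hu'
      have hua : u ^ a ∈ J := (phi_ker J _).mp (by rw [map_pow]; exact ha)
      exact ⟨a + a, by rw [pow_add]; exact hJ2 _ hua _ hua⟩

/-- Main induction. -/
lemma main : ∀ (n : ℕ), 2 ≤ n → ∀ {R : Type u} [Ring R],
    (∀ c : R, IsC n c → c = 0) →
    ∀ u ∈ span {z : R | ∃ a b : R, z = a * b - b * a}, IsNilpotent u := by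
  intro n hn
  induction n, hn using Nat.le_induction with
  | base =>
    intro R _ hL u hu
    obtain ⟨T, hTsub, huT⟩ := exists_finset_span hu
    refine nil_of_finset T.card T le_rfl ?_ u huT
    intro c hcT
    obtain ⟨a, b, hab⟩ := hTsub hcT
    have hc1 : IsC 1 c := ⟨a, [b], rfl, by simp [lnc, hab]⟩
    exact ⟨central (m := 0) hL hc1, comm_sq_zero hL hc1⟩
  | succ n hn ih =>
    intro R _ hL u hu
    obtain ⟨m, rfl⟩ : ∃ m, n = m + 1 := ⟨n - 1, by omega⟩
    have hm : 1 ≤ m := by omega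
    let G : Set R := {c : R | IsC (m + 1) c}
    let I := span G
    have hI2 : ∀ v ∈ I, ∀ w ∈ I, v * w = 0 :=
      span_mul_span_zero (fun g hg => central hL hg)
        (fun g hg h hh => top_mul_top hL hm hg hh)
    let Q := I.ringCon.Quotient
    let φ : R →+* Q := RingCon.mk' I.ringCon
    have hφs : Function.Surjective φ := phi_surjective I
    have hLQ : ∀ c : Q, IsC (m + 1) c → c = 0 := by
      rintro c ⟨x', l', hlen, rfl⟩
      obtain ⟨x, rfl⟩ := hφs x'
      obtain ⟨l, rfl⟩ := exists_list_map φ hφs l'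
      rw [← lnc_map]
      refine (phi_ker I _).mpr (subset_span ?_)
      exact ⟨x, l, by simpa using hlen, rfl⟩
    have hu' : φ u ∈ span {z : Q | ∃ a b : Q, z = a * b - b * a} := by
      refine map_mem_span φ (fun g hg => ?_) u hu
      obtain ⟨a, b, rfl⟩ := hg
      exact subset_span ⟨φ a, φ b, by simp⟩
    obtain ⟨a, ha⟩ := ih hLQ (φ u) hu'
    have hua : u ^ a ∈ I := (phi_ker I _).mp (by rw [map_pow]; exact ha)
    exact ⟨a + a, by rw [pow_add]; exact hI2 _ hua _ hua⟩

end CommIdealNilAux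

theorem commutator_ideal_nil {R : Type*} [Ring R] (n : ℕ) (hn : 2 ≤ n)
    (hLn : ∀ (x : R) (l : List R), l.length = n → lnc x l = 0)
    (u : R) (hu : u ∈ TwoSidedIdeal.span {z : R | ∃ a b : R, z = a * b - b * a}) :
    IsNilpotent u := by
  have hL : ∀ c : R, CommIdealNilAux.IsC n c → c = 0 := by
    rintro c ⟨x, l, hl, rfl⟩
    exact hLn x l hl
  exact CommIdealNilAux.main n hn hL u hu
end

section
/- Every simple unital Lie nilpotent ring is a field (i.e., commutative with every nonzero element invertible). -/
section Aux

variable {R : Type*} [Ring R]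

lemma lnc_cons (x y : R) (l : List R) : lnc x (y :: l) = lnc (x * y - y * x) l := rfl

lemma lnc_append_singleton (x v : R) (l : List R) :
    lnc x (l ++ [v]) = lnc x l * v - v * lnc x l := by
  simp [lnc, List.foldl_append]

lemma lnc_neg (x : R) (l : List R) : lnc (-x) l = - lnc x l := by
  induction l generalizing x with
  | nil => rfl
  | cons y l ih =>
      rw [lnc_cons, lnc_cons, ← ih]
      congr 1
      noncomm_ring

/-- The set of multiples of a central element is a two-sided ideal. -/
def centralIdeal (c : R) (hc : ∀ r : R, c * r = r * c) : TwoSidedIdeal R :=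
  TwoSidedIdeal.mk' {x | ∃ t, x = t * c}
    ⟨0, by noncomm_ring⟩
    (fun {x y} hx hy => by
      obtain ⟨t, ht⟩ := hx; obtain ⟨s, hs⟩ := hy
      exact ⟨t + s, by rw [ht, hs]; noncomm_ring⟩)
    (fun {x} hx => by
      obtain ⟨t, ht⟩ := hx
      exact ⟨-t, by rw [ht]; noncomm_ring⟩)
    (fun {x y} hy => by
      obtain ⟨t, ht⟩ := hy
      exact ⟨x * t, by rw [ht]; noncomm_ring⟩)
    (fun {x y} hx => by
      obtain ⟨t, ht⟩ := hx
      exact ⟨t * y, by rw [ht, mul_assoc, hc y, ← mul_assoc]⟩)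

lemma mem_centralIdeal (c : R) (hc : ∀ r : R, c * r = r * c) (x : R) :
    x ∈ centralIdeal c hc ↔ ∃ t, x = t * c :=
  TwoSidedIdeal.mem_mk' _ _ _ _ _ _ x

variable [Nontrivial R]

/-- A central element which is a commutator must be zero. -/
lemma central_commutator_eq_zero (n : ℕ)
    (hLn : ∀ (x : R) (l : List R), l.length = n → lnc x l = 0)
    (hsimple : ∀ I : TwoSidedIdeal R, I = ⊥ ∨ I = ⊤)
    (u v : R) (hc : ∀ r : R, (u * v - v * u) * r = r * (u * v - v * u)) :
    u * v - v * u = 0 := by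
  by_contra h
  set c := u * v - v * u with hcdef
  -- the ideal of multiples of `c` is nonzero, hence the whole ring
  have hI : centralIdeal c hc = ⊤ := by
    rcases hsimple (centralIdeal c hc) with hbot | htop
    · exfalso
      have : c ∈ centralIdeal c hc := (mem_centralIdeal c hc c).2 ⟨1, by noncomm_ring⟩
      rw [hbot, TwoSidedIdeal.mem_bot] at this
      exact h this
    · exact htop
  have h1 : (1 : R) ∈ centralIdeal c hc := by rw [hI]; exact TwoSidedIdeal.mem_top _
  obtain ⟨t, ht⟩ := (mem_centralIdeal c hc 1).1 h1
  have ht' : t * c = 1 := ht.symm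
  have hct : c * t = 1 := by rw [hc t]; exact ht'
  -- t is central
  have htc : ∀ r : R, t * r = r * t := by
    intro r
    calc t * r = t * r * (t * c) := by rw [ht', mul_one]
      _ = t * (r * (t * c)) := by noncomm_ring
      _ = t * (r * (c * t)) := by rw [hc t]
      _ = t * (c * (r * t)) := by rw [← mul_assoc r c, ← hc r, mul_assoc]
      _ = (t * c) * (r * t) := by noncomm_ring
      _ = r * t := by rw [ht', one_mul]
  -- w := t * v satisfies [u, w] = 1
  set w := t * v with hwdef
  have huw : u * w - w * u = 1 := by
    have h2 : u * w - w * u = t * (u * v - v * u) := by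
      rw [hwdef, ← mul_assoc, ← htc u]; noncomm_ring
    rw [h2, ← hcdef, ht']
  -- iterated commutators with `u * w` reproduce ± w
  have hwp : w * (u * w) - (u * w) * w = -w := by
    have h3 : w * (u * w) - (u * w) * w = -((u * w - w * u) * w) := by noncomm_ring
    rw [h3, huw, one_mul]
  have hrep : ∀ k : ℕ, lnc w (List.replicate k (u * w)) = w ∨
      lnc w (List.replicate k (u * w)) = -w := by
    intro k
    induction k with
    | zero => left; rfl
    | succ k ih =>
        rw [List.replicate_succ, lnc_cons, hwp, lnc_neg]
        rcases ih with h' | h'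
        · right; rw [h']
        · left; rw [h', neg_neg]
  have hzero : lnc w (List.replicate n (u * w)) = 0 := hLn w _ List.length_replicate
  have hw0 : w = 0 := by
    rcases hrep n with h' | h'
    · rw [hzero] at h'; exact h'.symm
    · rw [hzero] at h'; exact neg_eq_zero.mp h'.symm
  rw [hw0] at huw
  simp only [mul_zero, zero_mul, sub_zero, sub_self] at huw
  exact zero_ne_one huw

end Aux

theorem simple_lie_nilpotent_is_field {R : Type*} [Ring R] [Nontrivial R]
    (n : ℕ) (hn : 1 ≤ n)
    (hLn : ∀ (x : R) (l : List R), l.length = n → lnc x l = 0)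
    (hsimple : ∀ I : TwoSidedIdeal R, I = ⊥ ∨ I = ⊤) :
    (∀ a b : R, a * b = b * a) ∧ ∀ a : R, a ≠ 0 → ∃ b : R, a * b = 1 ∧ b * a = 1 := by
  -- one step of downward induction on the nilpotency length
  have step : ∀ k : ℕ, 1 ≤ k →
      (∀ (x : R) (l : List R), l.length = k + 1 → lnc x l = 0) →
      (∀ (x : R) (l : List R), l.length = k → lnc x l = 0) := by
    intro k hk hP x l hl
    rcases List.eq_nil_or_concat l with rfl | ⟨l', v, rfl⟩
    · simp at hl; omega
    · rw [List.concat_eq_append] at hl ⊢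
      rw [lnc_append_singleton]
      apply central_commutator_eq_zero n hLn hsimple
      intro r
      have h2 := hP x ((l' ++ [v]) ++ [r]) (by simp at hl ⊢; omega)
      rw [lnc_append_singleton, lnc_append_singleton] at h2
      exact sub_eq_zero.mp h2
  -- all commutators of length 2 vanish
  have key : ∀ d : ℕ, d < n → ∀ (x : R) (l : List R), l.length = n - d → lnc x l = 0 := by
    intro d
    induction d with
    | zero => intro _ x l hl; exact hLn x l (by simpa using hl)
    | succ d ih =>
        intro hd x l hl
        refine step (n - (d + 1)) (by omega) ?_ x l hl
        intro x' l' hl'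
        exact ih (by omega) x' l' (by omega)
  have hcomm : ∀ a b : R, a * b = b * a := by
    intro a b
    have h1 : lnc a [b] = 0 := key (n - 1) (by omega) a [b] (by simp; omega)
    have : a * b - b * a = 0 := h1
    exact sub_eq_zero.mp this
  refine ⟨hcomm, fun a ha => ?_⟩
  have hc : ∀ r : R, a * r = r * a := fun r => hcomm a r
  have hI : centralIdeal a hc = ⊤ := by
    rcases hsimple (centralIdeal a hc) with hbot | htop
    · exfalso
      have hm : a ∈ centralIdeal a hc := (mem_centralIdeal a hc a).2 ⟨1, (one_mul a).symm⟩
      rw [hbot, TwoSidedIdeal.mem_bot] at hm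
      exact ha hm
    · exact htop
  have h1 : (1 : R) ∈ centralIdeal a hc := by rw [hI]; exact TwoSidedIdeal.mem_top _
  obtain ⟨t, ht⟩ := (mem_centralIdeal a hc 1).1 h1
  exact ⟨t, by rw [hcomm a t]; exact ht.symm, ht.symm⟩
end
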